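/- ḡ(3) = 2: there exists a correct adaptive sorting strategy of depth 2 in the two-unknown-weights model on 3 coins, but there is no correct adaptive sorting strategy of depth 1 on 3 coins (the case n = 3 of Lemma 3, together with the information-theoretic lower bound, since 2^3 − 1 = 7 > 3). -/

import Mathlib

/-!
Adaptive sorting model with two unknown weights and no reference coins.
Coins are the elements of `Fin n`; an unknown heavy set `H : Finset (Fin n)`
is fixed (`H = ∅` and `H = univ` both mean that all coins weigh the same).
A weighing is a pair `(L, R)` of disjoint subsets of `Fin n` with `|L| = |R|`,
and its outcome is the three-valued comparison of `|L ∩ H|` and `|R ∩ H|`.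
-/

/-- Outcome of weighing pans `L` and `R` when the heavy set is `H`. -/
def weighOutcome {n : ℕ} (L R H : Finset (Fin n)) : Ordering :=
  compare (L ∩ H).card (R ∩ H).card

/-- The outcome sequence produced by heavy set `H` after `k` weighings of the
adaptive strategy `weigh` (which assigns a weighing to each outcome history). -/
def runList {n : ℕ} (weigh : List Ordering → Finset (Fin n) × Finset (Fin n))
    (H : Finset (Fin n)) : ℕ → List Ordering
  | 0 => []
  | k + 1 =>
    let σ := runList weigh H k
    σ ++ [weighOutcome (weigh σ).1 (weigh σ).2 H]

/-- `(weigh, answer)` is a correct adaptive sorting strategy of depth `k` on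
`n` coins in the two-unknown-weights model: every prescribed weighing has
disjoint pans of equal size, and for every heavy set `H` the answer at the
outcome sequence produced by `H` equals `H`, except that when `H` is `∅` or
`univ` it suffices that the answer be `∅` or `univ`. -/
def IsCorrectSorting (n k : ℕ)
    (weigh : List Ordering → Finset (Fin n) × Finset (Fin n))
    (answer : List Ordering → Finset (Fin n)) : Prop :=
  (∀ σ : List Ordering, σ.length < k →
      Disjoint (weigh σ).1 (weigh σ).2 ∧ (weigh σ).1.card = (weigh σ).2.card) ∧
  (∀ H : Finset (Fin n),
      ((H = ∅ ∨ H = Finset.univ) →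
        (answer (runList weigh H k) = ∅ ∨ answer (runList weigh H k) = Finset.univ)) ∧
      (H ≠ ∅ → H ≠ Finset.univ → answer (runList weigh H k) = H))

/-- There is a correct adaptive sorting strategy of depth `k` on `n` coins. -/
def HasSorting (n k : ℕ) : Prop :=
  ∃ weigh answer, IsCorrectSorting n k weigh answer

/-- `ḡ n` is the least number of weighings sufficient to sort `n` coins of two
possible distinct weights by a balance. -/
noncomputable def gbar (n : ℕ) : ℕ := sInf {k | HasSorting n k}


theorem runList_length {n : ℕ} (weigh : List Ordering → Finset (Fin n) × Finset (Fin n))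
    (H : Finset (Fin n)) (k : ℕ) : (runList weigh H k).length = k := by
  induction k with
  | zero => rfl
  | succ k ih => simp [runList, ih]

theorem IsCorrectSorting.runList_injOn {n k : ℕ}
    {weigh : List Ordering → Finset (Fin n) × Finset (Fin n)}
    {answer : List Ordering → Finset (Fin n)} (h : IsCorrectSorting n k weigh answer) :
    Set.InjOn (fun H => runList weigh H k) {H | H ≠ Finset.univ} := by
  have trivial_answer {H H' : Finset (Fin n)} (hH : H = ∅) (hH' : H' ≠ ∅) (hU' : H' ≠ .univ)
      (hrun : runList weigh H k = runList weigh H' k) : False := by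
    have := (h.2 H).1 (.inl hH)
    rw [hrun, (h.2 H').2 hH' hU'] at this
    exact this.elim hH' hU'
  intro H hU H' hU' hrun
  simp only [Set.mem_ofPred_eq] at hU hU' hrun
  by_cases hH : H = ∅ <;> by_cases hH' : H' = ∅
  · rw [hH, hH']
  · exact (trivial_answer hH hH' hU' hrun).elim
  · exact (trivial_answer hH' hH hU hrun.symm).elim
  · rw [← (h.2 H).2 hH hU, ← (h.2 H').2 hH' hU', hrun]

/-- Information-theoretic bound: the `2 ^ n - 1` heavy sets other than `univ` must
produce pairwise different outcome sequences, of which there are `3 ^ k`. -/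
theorem HasSorting.two_pow_sub_one_le_three_pow {n k : ℕ} (h : HasSorting n k) :
    2 ^ n - 1 ≤ 3 ^ k := by
  obtain ⟨weigh, answer, hcorrect⟩ := h
  let run (H : Finset (Fin n)) : List.Vector Ordering k :=
    ⟨runList weigh H k, runList_length weigh H k⟩
  have hinj : Set.InjOn run ↑((Finset.univ : Finset (Finset (Fin n))).erase .univ) :=
    fun H hH H' hH' hrun => hcorrect.runList_injOn (by simpa using hH) (by simpa using hH') (congrArg Subtype.val hrun)
  calc 2 ^ n - 1 = (Finset.univ.erase (Finset.univ : Finset (Fin n))).card := by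
        simp [Finset.card_erase_of_mem]
    _ ≤ (Finset.univ : Finset (List.Vector Ordering k)).card :=
        Finset.card_le_card_of_injOn run (fun _ _ => Finset.mem_coe.2 (Finset.mem_univ _)) hinj
    _ = 3 ^ k := by simp only [Finset.card_univ, card_vector]; rfl

theorem two_le_of_hasSorting_three {k : ℕ} (h : HasSorting 3 k) : 2 ≤ k := by
  have hbound := h.two_pow_sub_one_le_three_pow
  by_contra! hk
  have : 3 ^ k ≤ 3 ^ 1 := Nat.pow_le_pow_right (by norm_num) (by omega)
  omega

def sortThreeWeigh : List Ordering → Finset (Fin 3) × Finset (Fin 3)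
  | [] => ({0}, {1})
  | .lt :: _ => ({1}, {2})
  | _ :: _ => ({0}, {2})

def sortThreeAnswer : List Ordering → Finset (Fin 3)
  | [.gt, .gt] => {0}
  | [.gt, .eq] => {0, 2}
  | [.lt, .gt] => {1}
  | [.lt, .eq] => {1, 2}
  | [.eq, .lt] => {2}
  | [.eq, .gt] => {0, 1}
  | _ => ∅

theorem isCorrectSorting_sortThree : IsCorrectSorting 3 2 sortThreeWeigh sortThreeAnswer := by
  refine ⟨fun σ _ => ?_, by decide⟩
  rcases σ with _ | ⟨_ | _ | _, _⟩ <;> simp only [sortThreeWeigh] <;> decide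

/-- **`ḡ 3 = 2`.** There is a correct adaptive sorting strategy of depth `2`
on `3` coins, but none of depth `1`. -/
theorem gbar_three_eq_two :
    HasSorting 3 2 ∧ ¬ HasSorting 3 1 ∧ gbar 3 = 2 := by
  have upper : HasSorting 3 2 := ⟨_, _, isCorrectSorting_sortThree⟩
  refine ⟨upper, fun h => by simpa using two_le_of_hasSorting_three h, ?_⟩
  exact le_antisymm (Nat.sInf_le upper)
    (le_csInf ⟨2, upper⟩ fun _ => two_le_of_hasSorting_three)
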